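/- arXiv:1801.02790 — 7 statements merged into one kernel-verified Lean document; each statement's English description precedes it below -/
import Mathlib

section
/- Fix θ > 0 and let a_θ = ln(1+θ)/θ and b_θ = (1 - a_θ)/θ. Then for all real t with -1 < t ≤ θ, (1+t) ≤ exp(t - b_θ · t²). -/
private lemma hasDerivAt_g (b x : ℝ) (hx : -1 < x) :
    HasDerivAt (fun s : ℝ => s - b * s ^ 2 - Real.log (1 + s))
      (1 - b * (2 * x) - 1 / (1 + x)) x := by
  have hne : (1 : ℝ) + x ≠ 0 := by linarith
  have h1 : HasDerivAt (fun s : ℝ => 1 + s) 1 x := by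
    simpa using (hasDerivAt_id x).const_add (1 : ℝ)
  have h2 : HasDerivAt (fun s : ℝ => Real.log (1 + s)) (1 / (1 + x)) x := by
    have := (Real.hasDerivAt_log hne).comp x h1
    exact this.congr_deriv (by simp)
  have h3 : HasDerivAt (fun s : ℝ => s - b * s ^ 2) (1 - b * (2 * x)) x := by
    have hp : HasDerivAt (fun s : ℝ => b * s ^ 2) (b * (2 * x)) x := by
      simpa using (hasDerivAt_pow 2 x).const_mul b
    exact (hasDerivAt_id' x).sub hp
  exact h3.sub h2

private lemma log_lower (θ : ℝ) (hθ : 0 ≤ θ) : θ - θ ^ 2 / 2 ≤ Real.log (1 + θ) := by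
  set F : ℝ → ℝ := fun s => Real.log (1 + s) - s + s ^ 2 / 2 with hF
  have hderiv : ∀ x : ℝ, 0 < x → HasDerivAt F (1 / (1 + x) - 1 + x) x := by
    intro x hx
    have hne : (1 : ℝ) + x ≠ 0 := by linarith
    have h1 : HasDerivAt (fun s : ℝ => 1 + s) 1 x := by
      simpa using (hasDerivAt_id x).const_add (1 : ℝ)
    have h2 : HasDerivAt (fun s : ℝ => Real.log (1 + s)) (1 / (1 + x)) x := by
      have := (Real.hasDerivAt_log hne).comp x h1
      exact this.congr_deriv (by simp)
    have h3 : HasDerivAt (fun s : ℝ => s ^ 2 / 2) x x := by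
      have := (hasDerivAt_pow 2 x).div_const 2
      simpa using this
    exact (h2.sub (hasDerivAt_id' x)).add h3
  have hmono : MonotoneOn F (Set.Ici (0 : ℝ)) := by
    apply monotoneOn_of_deriv_nonneg (convex_Ici 0)
    · intro x hx
      have hx' : (0 : ℝ) ≤ x := hx
      have hne : (1 : ℝ) + x ≠ 0 := by linarith
      exact ContinuousAt.continuousWithinAt (by fun_prop (disch := exact hne))
    · intro x hx
      rw [interior_Ici] at hx
      exact (hderiv x hx).differentiableAt.differentiableWithinAt
    · intro x hx
      rw [interior_Ici] at hx
      rw [(hderiv x hx).deriv]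
      have hx' : 0 < x := Set.mem_Ioi.mp hx
      have h1x : (0 : ℝ) < 1 + x := by linarith
      have heq : 1 / (1 + x) - 1 + x = x ^ 2 / (1 + x) := by field_simp; ring
      rw [heq]
      positivity
  have h0 : F 0 ≤ F θ := hmono (by simp) (by simpa using hθ) hθ
  simp [hF] at h0
  linarith

theorem stmt3 (θ : ℝ) (hθ : 0 < θ) (a b : ℝ)
    (ha : a = Real.log (1 + θ) / θ) (hb : b = (1 - a) / θ) :
    ∀ t : ℝ, -1 < t → t ≤ θ → 1 + t ≤ Real.exp (t - b * t ^ 2) := by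
  intro t ht1 ht2
  have h1t : (0 : ℝ) < 1 + t := by linarith
  have h1θ : (0 : ℝ) < 1 + θ := by linarith
  have hlogθ : Real.log (1 + θ) ≤ θ := by
    have := Real.log_le_sub_one_of_pos h1θ
    linarith
  have hblow := log_lower θ hθ.le
  have hbθ : b * θ ^ 2 = θ - Real.log (1 + θ) := by
    have hθ' : θ ≠ 0 := hθ.ne'
    rw [hb, ha]
    field_simp
  have hθ2 : (0 : ℝ) < θ ^ 2 := by positivity
  have hbnn : 0 ≤ b := by nlinarith
  have hb2 : b ≤ 1 / 2 := by nlinarith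
  set g : ℝ → ℝ := fun s => s - b * s ^ 2 - Real.log (1 + s) with hg
  have hgθ : g θ = 0 := by simp only [hg]; rw [hbθ]; ring
  have hg0 : g 0 = 0 := by simp [hg]
  have hcont : ∀ s : ℝ, -1 < s → ContinuousWithinAt g (Set.univ) s := fun s hs =>
    (hasDerivAt_g b s hs).continuousAt.continuousWithinAt
  suffices h : 0 ≤ g t by
    calc 1 + t = Real.exp (Real.log (1 + t)) := (Real.exp_log h1t).symm
    _ ≤ Real.exp (t - b * t ^ 2) := by
        apply Real.exp_le_exp.mpr
        have : g t = t - b * t ^ 2 - Real.log (1 + t) := rfl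
        linarith [this ▸ h]
  rcases le_or_gt t 0 with htn | htp
  · -- g antitone on [t, 0]
    have hanti : AntitoneOn g (Set.Icc t 0) := by
      apply antitoneOn_of_deriv_nonpos (convex_Icc t 0)
      · intro x hx
        exact ((hasDerivAt_g b x (by linarith [hx.1])).continuousAt).continuousWithinAt
      · intro x hx
        rw [interior_Icc] at hx
        exact (hasDerivAt_g b x (by linarith [hx.1])).differentiableAt.differentiableWithinAt
      · intro x hx
        rw [interior_Icc] at hx
        have hx1 : -1 < x := by linarith [hx.1]
        rw [(hasDerivAt_g b x hx1).deriv]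
        have h1x : (0 : ℝ) < 1 + x := by linarith
        have hxneg : x < 0 := hx.2
        have key : (1 - b * (2 * x) - 1 / (1 + x)) = x * (1 - 2 * b * (1 + x)) / (1 + x) := by
          rw [eq_div_iff h1x.ne']
          field_simp; ring
        rw [key]
        apply div_nonpos_of_nonpos_of_nonneg _ h1x.le
        nlinarith [mul_nonneg hbnn (sq_nonneg x),
          mul_nonneg (by linarith : (0:ℝ) ≤ 1 - 2 * b) (by linarith : (0:ℝ) ≤ -x)]
    have := hanti (Set.mem_Icc.mpr ⟨le_refl t, htn⟩) (Set.mem_Icc.mpr ⟨htn, le_refl 0⟩) htn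
    linarith [hg0 ▸ this]
  · rcases le_or_gt (2 * b * (1 + t)) 1 with hsmall | hbig
    · -- g monotone on [0, t]
      have hmono : MonotoneOn g (Set.Icc 0 t) := by
        apply monotoneOn_of_deriv_nonneg (convex_Icc 0 t)
        · intro x hx
          exact ((hasDerivAt_g b x (by linarith [hx.1])).continuousAt).continuousWithinAt
        · intro x hx
          rw [interior_Icc] at hx
          exact (hasDerivAt_g b x (by linarith [hx.1])).differentiableAt.differentiableWithinAt
        · intro x hx
          rw [interior_Icc] at hx
          have hx1 : -1 < x := by linarith [hx.1]
          rw [(hasDerivAt_g b x hx1).deriv]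
          have h1x : (0 : ℝ) < 1 + x := by linarith
          have key : (1 - b * (2 * x) - 1 / (1 + x)) = x * (1 - 2 * b * (1 + x)) / (1 + x) := by
            rw [eq_div_iff h1x.ne']
            field_simp; ring
          rw [key]
          apply div_nonneg _ h1x.le
          nlinarith [hx.1, hx.2, mul_nonneg hbnn (by linarith [hx.2] : (0:ℝ) ≤ t - x)]
      have := hmono (Set.mem_Icc.mpr ⟨le_refl 0, htp.le⟩) (Set.mem_Icc.mpr ⟨htp.le, le_refl t⟩) htp.le
      linarith [hg0 ▸ this]
    · -- g antitone on [t, θ]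
      have hanti : AntitoneOn g (Set.Icc t θ) := by
        apply antitoneOn_of_deriv_nonpos (convex_Icc t θ)
        · intro x hx
          exact ((hasDerivAt_g b x (by linarith [hx.1])).continuousAt).continuousWithinAt
        · intro x hx
          rw [interior_Icc] at hx
          exact (hasDerivAt_g b x (by linarith [hx.1])).differentiableAt.differentiableWithinAt
        · intro x hx
          rw [interior_Icc] at hx
          have hx1 : -1 < x := by linarith [hx.1]
          rw [(hasDerivAt_g b x hx1).deriv]
          have h1x : (0 : ℝ) < 1 + x := by linarith
          have key : (1 - b * (2 * x) - 1 / (1 + x)) = x * (1 - 2 * b * (1 + x)) / (1 + x) := by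
            rw [eq_div_iff h1x.ne']
            field_simp; ring
          rw [key]
          apply div_nonpos_of_nonpos_of_nonneg _ h1x.le
          nlinarith [hx.1, hx.2, mul_nonneg hbnn (by linarith [hx.1] : (0:ℝ) ≤ x - t)]
      have := hanti (Set.mem_Icc.mpr ⟨le_refl t, ht2⟩) (Set.mem_Icc.mpr ⟨ht2, le_refl θ⟩) ht2
      linarith [hgθ ▸ this]
end

section
/- Let p, q be probability distributions on a finite index set [n] (nonnegative reals summing to 1), with p_i > 0 whenever q_i > 0. Fix θ > 0 and let A_θ = {i : q_i > (1+θ)·p_i} and B_θ = [n] \ A_θ. Then D_KL(p‖q) ≥ (1 - ln(1+θ)/θ) · ( Σ_{i∈A_θ} |q_i - p_i| + (1/θ)·Σ_{i∈B_θ, p_i>0} (q_i - p_i)²/p_i ). -/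
open Real Set

lemma log_quad {θ : ℝ} (hθ : 0 < θ) : θ - Real.log (1+θ) ≤ θ^2/2 := by
  have key : MonotoneOn (fun x : ℝ => x^2/2 - x + Real.log (1+x)) (Set.Icc 0 θ) := by
    apply monotoneOn_of_hasDerivWithinAt_nonneg (convex_Icc 0 θ)
      (f' := fun x => x - 1 + (1+x)⁻¹)
    · apply ContinuousOn.add (by fun_prop)
      apply ContinuousOn.log (by fun_prop)
      intro x hx
      have := hx.1
      nlinarith [hx.1]
    · intro x hx
      rw [interior_Icc] at hx
      have h1x : (0:ℝ) < 1 + x := by nlinarith [hx.1]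
      have hd : HasDerivAt (fun x : ℝ => x^2/2 - x + Real.log (1+x)) (x - 1 + (1+x)⁻¹) x := by
        have hl : HasDerivAt (fun x : ℝ => Real.log (1+x)) ((1:ℝ)/(1+x)) x := by
          have hb : HasDerivAt (fun x : ℝ => 1+x) 1 x := (hasDerivAt_id x).const_add 1
          simpa using hb.log h1x.ne'
        have hp : HasDerivAt (fun x : ℝ => x^2/2 - x) (x - 1) x := by
          have := ((hasDerivAt_pow 2 x).div_const 2).sub (hasDerivAt_id x)
          exact this.congr_deriv (by norm_num)
        have := hp.add hl
        exact this.congr_deriv (by rw [one_div])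
      exact hd.hasDerivWithinAt
    · intro x hx
      rw [interior_Icc] at hx
      have h1x : (0:ℝ) < 1 + x := by nlinarith [hx.1]
      have : x - 1 + (1+x)⁻¹ = x^2/(1+x) := by field_simp; ring
      rw [this]; positivity
  have h0 : (0:ℝ) ∈ Set.Icc (0:ℝ) θ := by constructor <;> linarith
  have hθ' : θ ∈ Set.Icc (0:ℝ) θ := by constructor <;> linarith
  have := key h0 hθ' hθ.le
  simp at this
  linarith

lemma lemA {θ r : ℝ} (hθ : 0 < θ) (hr : 1 + θ ≤ r) :
    θ * Real.log r ≤ Real.log (1+θ) * (r - 1) := by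
  rcases eq_or_lt_of_le hr with h | h
  · rw [← h]; ring_nf; rfl
  have key : MonotoneOn (fun x : ℝ => Real.log (1+θ) * (x-1) - θ * Real.log x)
      (Set.Icc (1+θ) r) := by
    apply monotoneOn_of_hasDerivWithinAt_nonneg (convex_Icc _ _)
      (f' := fun x => Real.log (1+θ) - θ / x)
    · apply ContinuousOn.sub (by fun_prop)
      apply ContinuousOn.mul continuousOn_const
      apply ContinuousOn.log (by fun_prop)
      intro x hx; nlinarith [hx.1]
    · intro x hx
      rw [interior_Icc] at hx
      have hx0 : (0:ℝ) < x := by nlinarith [hx.1]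
      have hd : HasDerivAt (fun x : ℝ => Real.log (1+θ) * (x-1) - θ * Real.log x)
          (Real.log (1+θ) - θ / x) x := by
        have h1 : HasDerivAt (fun x : ℝ => Real.log (1+θ) * (x-1)) (Real.log (1+θ)) x := by
          simpa using (((hasDerivAt_id x).sub_const 1).const_mul (Real.log (1+θ)))
        have h2 : HasDerivAt (fun x : ℝ => θ * Real.log x) (θ / x) x := by
          simpa [div_eq_mul_inv, mul_comm] using (Real.hasDerivAt_log hx0.ne').const_mul θ
        exact h1.sub h2
      exact hd.hasDerivWithinAt
    · intro x hx
      rw [interior_Icc] at hx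
      have hx1 : 1 + θ < x := hx.1
      have hlog : θ / (1+θ) ≤ Real.log (1+θ) := by
        have := Real.one_sub_inv_le_log_of_pos (x := 1+θ) (by linarith)
        have he : 1 - (1+θ)⁻¹ = θ/(1+θ) := by field_simp; ring
        linarith [he ▸ this]
      have : θ / x ≤ θ / (1+θ) := by
        apply div_le_div_of_nonneg_left hθ.le (by linarith) hx1.le
      linarith
  have h1 : (1+θ) ∈ Set.Icc (1+θ) r := by constructor <;> linarith
  have h2 : r ∈ Set.Icc (1+θ) r := by constructor <;> linarith
  have := key h1 h2 hr
  simp only at this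
  linarith



lemma hasDerivAt_h (k : ℝ) {x : ℝ} (hx : 0 < x) :
    HasDerivAt (fun x : ℝ => x - 1 - Real.log x - k*(x-1)^2) (1 - x⁻¹ - 2*k*(x-1)) x := by
  have h1 : HasDerivAt (fun x : ℝ => x - 1 - Real.log x) (1 - x⁻¹) x :=
    ((hasDerivAt_id x).sub_const 1).sub (Real.hasDerivAt_log hx.ne')
  have h2 : HasDerivAt (fun x : ℝ => k*(x-1)^2) (2*k*(x-1)) x := by
    have : HasDerivAt (fun x : ℝ => (x-1)^2) (2*(x-1)) x := by
      exact (((hasDerivAt_id x).sub_const 1).pow 2).congr_deriv (by simp)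
    have := this.const_mul k
    exact this.congr_deriv (by ring)
  exact h1.sub h2

lemma lemB {θ r : ℝ} (hθ : 0 < θ) (hr0 : 0 < r) (hr : r ≤ 1 + θ) :
    (θ - Real.log (1+θ))/θ^2 * (r-1)^2 ≤ r - 1 - Real.log r := by
  set k := (θ - Real.log (1+θ))/θ^2 with hkdef
  have hlogθ : Real.log (1+θ) < θ := by
    have := Real.log_lt_sub_one_of_pos (x := 1+θ) (by linarith) (by linarith)
    linarith
  have hk0 : 0 < k := by apply div_pos (by linarith) (by positivity)
  have hk2 : 2*k ≤ 1 := by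
    rw [hkdef, ← mul_div_assoc, div_le_one (by positivity : (0:ℝ) < θ^2)]
    nlinarith [log_quad hθ]
  set h : ℝ → ℝ := fun x => x - 1 - Real.log x - k*(x-1)^2 with hhdef
  have hcont : ∀ a b : ℝ, 0 < a → ContinuousOn h (Set.Icc a b) := by
    intro a b ha
    apply ContinuousOn.sub
    apply ContinuousOn.sub (by fun_prop)
    apply ContinuousOn.log (by fun_prop)
    · intro x hx; nlinarith [hx.1]
    · fun_prop
  have h1 : h 1 = 0 := by simp [hhdef]
  have hθ1 : h (1+θ) = 0 := by
    show (1+θ) - 1 - Real.log (1+θ) - k*((1+θ)-1)^2 = 0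
    rw [hkdef]
    field_simp
    ring
  have goal_eq : k * (r-1)^2 ≤ r - 1 - Real.log r ↔ 0 ≤ h r := by
    constructor <;> intro <;> simp only [hhdef] at * <;> linarith
  rw [goal_eq]
  rcases le_or_gt r 1 with hcase | hcase
  · -- antitone on [r,1]
    have key : AntitoneOn h (Set.Icc r 1) := by
      apply antitoneOn_of_hasDerivWithinAt_nonpos (convex_Icc _ _)
        (f' := fun x => 1 - x⁻¹ - 2*k*(x-1)) (hcont r 1 hr0)
      · intro x hx
        rw [interior_Icc] at hx
        exact (hasDerivAt_h k (lt_trans hr0 hx.1)).hasDerivWithinAt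
      · intro x hx
        rw [interior_Icc] at hx
        have hx0 : 0 < x := lt_trans hr0 hx.1
        have hx1 : x < 1 := hx.2
        have e : 1 - x⁻¹ - 2*k*(x-1) = (x - 1)*(1 - 2*k*x)/x := by field_simp
        rw [e]
        apply div_nonpos_of_nonpos_of_nonneg _ hx0.le
        have hb : 2*k*x ≤ x := by nlinarith [mul_nonneg (by linarith : (0:ℝ) ≤ 1-2*k) hx0.le]
        nlinarith [mul_nonneg (by linarith : (0:ℝ) ≤ 1-x) (by linarith : (0:ℝ) ≤ 1-2*k*x)]
    have := key (Set.mem_Icc.mpr ⟨le_refl r, hcase⟩) (Set.mem_Icc.mpr ⟨hcase, le_refl 1⟩) hcase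
    rw [h1] at this; exact this
  · rcases le_or_gt (2*k*r) 1 with hsub | hsub
    · have key : MonotoneOn h (Set.Icc 1 r) := by
        apply monotoneOn_of_hasDerivWithinAt_nonneg (convex_Icc _ _)
          (f' := fun x => 1 - x⁻¹ - 2*k*(x-1)) (hcont 1 r one_pos)
        · intro x hx
          rw [interior_Icc] at hx
          exact (hasDerivAt_h k (lt_trans one_pos hx.1)).hasDerivWithinAt
        · intro x hx
          rw [interior_Icc] at hx
          have hx0 : (0:ℝ) < x := lt_trans one_pos hx.1
          have e : 1 - x⁻¹ - 2*k*(x-1) = (x - 1)*(1 - 2*k*x)/x := by field_simp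
          rw [e]
          apply div_nonneg _ hx0.le
          have hb : 2*k*x ≤ 2*k*r := by
            nlinarith [mul_le_mul_of_nonneg_left hx.2.le (by linarith : (0:ℝ) ≤ 2*k)]
          exact mul_nonneg (by linarith [hx.1]) (by linarith)
      have := key (Set.mem_Icc.mpr ⟨le_refl 1, hcase.le⟩) (Set.mem_Icc.mpr ⟨hcase.le, le_refl r⟩) hcase.le
      rw [h1] at this; exact this
    · have key : AntitoneOn h (Set.Icc r (1+θ)) := by
        apply antitoneOn_of_hasDerivWithinAt_nonpos (convex_Icc _ _)
          (f' := fun x => 1 - x⁻¹ - 2*k*(x-1)) (hcont r (1+θ) hr0)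
        · intro x hx
          rw [interior_Icc] at hx
          exact (hasDerivAt_h k (lt_trans hr0 hx.1)).hasDerivWithinAt
        · intro x hx
          rw [interior_Icc] at hx
          have hx0 : (0:ℝ) < x := lt_trans hr0 hx.1
          have e : 1 - x⁻¹ - 2*k*(x-1) = (x - 1)*(1 - 2*k*x)/x := by field_simp
          rw [e]
          apply div_nonpos_of_nonpos_of_nonneg _ hx0.le
          have h1x : 1 < x := lt_trans hcase hx.1
          have hb : 2*k*r ≤ 2*k*x := by
            nlinarith [mul_le_mul_of_nonneg_left hx.1.le (by linarith : (0:ℝ) ≤ 2*k)]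
          nlinarith [mul_nonneg (by linarith : (0:ℝ) ≤ x-1) (by linarith : (0:ℝ) ≤ 2*k*x-1)]
      have := key (Set.mem_Icc.mpr ⟨le_refl r, hr⟩) (Set.mem_Icc.mpr ⟨hr, le_refl _⟩) hr
      rw [hθ1] at this; exact this


open Finset in
theorem stmt5 (n : ℕ) (p q : Fin n → ℝ)
    (hp0 : ∀ i, 0 ≤ p i) (hq0 : ∀ i, 0 ≤ q i)
    (hp1 : ∑ i, p i = 1) (hq1 : ∑ i, q i = 1)
    (hqp : ∀ i, 0 < q i → 0 < p i) (hpq : ∀ i, 0 < p i → 0 < q i)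
    (θ : ℝ) (hθ : 0 < θ) :
    ∑ i, p i * Real.log (p i / q i) ≥
      (1 - Real.log (1 + θ) / θ) *
        ((∑ i ∈ univ.filter (fun i => (1 + θ) * p i < q i), |q i - p i|) +
          (1 / θ) * ∑ i ∈ univ.filter (fun i => ¬ (1 + θ) * p i < q i ∧ 0 < p i),
            (q i - p i) ^ 2 / p i) := by
  classical
  set c := 1 - Real.log (1+θ)/θ with hcdef
  set t : Fin n → ℝ := fun i => p i * Real.log (p i / q i) + (q i - p i) with htdef
  have hL : ∑ i, p i * Real.log (p i / q i) = ∑ i, t i := by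
    simp only [htdef]
    rw [Finset.sum_add_distrib, Finset.sum_sub_distrib, hp1, hq1]
    ring
  have ht0 : ∀ i, 0 ≤ t i := by
    intro i
    by_cases hpi : 0 < p i
    · have hqi := hpq i hpi
      have hr0 : 0 < q i / p i := div_pos hqi hpi
      have hle := Real.log_le_sub_one_of_pos hr0
      have hlog : Real.log (p i / q i) = - Real.log (q i / p i) := by
        rw [← Real.log_inv, inv_div]
      have h2 : p i * (q i / p i - 1) = q i - p i := by field_simp
      simp only [htdef, hlog]
      nlinarith [mul_le_mul_of_nonneg_left hle hpi.le]
    · have hp0' : p i = 0 := le_antisymm (not_lt.mp hpi) (hp0 i)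
      have hq0' : q i = 0 := le_antisymm (not_lt.mp (fun h => hpi (hqp i h))) (hq0 i)
      simp [htdef, hp0', hq0']
  have htA : ∀ i ∈ univ.filter (fun i => (1 + θ) * p i < q i),
      c * |q i - p i| ≤ t i := by
    intro i hi
    rw [Finset.mem_filter] at hi
    have hiq : (1 + θ) * p i < q i := hi.2
    have hq : 0 < q i := lt_of_le_of_lt (mul_nonneg (by linarith) (hp0 i)) hiq
    have hp : 0 < p i := hqp i hq
    have hr : 1 + θ ≤ q i / p i := (le_div_iff₀ hp).mpr hiq.le
    have h1 := lemA hθ hr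
    have habs : |q i - p i| = q i - p i := abs_of_pos (by nlinarith [mul_pos hθ hp])
    have hlog : Real.log (p i / q i) = - Real.log (q i / p i) := by
      rw [← Real.log_inv, inv_div]
    have h3 : p i * (θ * Real.log (q i / p i)) ≤
        p i * (Real.log (1+θ) * (q i / p i - 1)) := mul_le_mul_of_nonneg_left h1 hp.le
    have h4 : p i * (Real.log (1+θ) * (q i / p i - 1)) = Real.log (1+θ) * (q i - p i) := by
      field_simp
    have h5 : p i * Real.log (q i / p i) ≤ Real.log (1+θ)/θ * (q i - p i) := by
      rw [div_mul_eq_mul_div, le_div_iff₀ hθ]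
      nlinarith [h3, h4]
    simp only [htdef, hlog, hcdef, habs]
    nlinarith [h5]
  have htB : ∀ i ∈ univ.filter (fun i => ¬ (1 + θ) * p i < q i ∧ 0 < p i),
      (c * (1/θ)) * ((q i - p i) ^ 2 / p i) ≤ t i := by
    intro i hi
    rw [Finset.mem_filter] at hi
    obtain ⟨hnlt, hp⟩ := hi.2
    have hq : 0 < q i := hpq i hp
    have hr : q i / p i ≤ 1 + θ := (div_le_iff₀ hp).mpr (by linarith [not_lt.mp hnlt])
    have h1 := lemB hθ (div_pos hq hp) hr
    have h3 := mul_le_mul_of_nonneg_left h1 hp.le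
    have e1 : p i * ((θ - Real.log (1+θ))/θ^2 * (q i / p i - 1)^2)
        = (θ - Real.log (1+θ))/θ^2 * ((q i - p i)^2 / p i) := by
      field_simp
    have e2 : p i * (q i / p i - 1 - Real.log (q i / p i))
        = (q i - p i) - p i * Real.log (q i / p i) := by
      field_simp
    rw [e1, e2] at h3
    have hc' : c = (θ - Real.log (1+θ))/θ := by
      rw [hcdef, sub_div, div_self hθ.ne']
    have hk : c * (1/θ) = (θ - Real.log (1+θ))/θ^2 := by
      rw [hc', div_mul_div_comm, mul_one, ← sq]
    have hlog : Real.log (p i / q i) = - Real.log (q i / p i) := by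
      rw [← Real.log_inv, inv_div]
    simp only [htdef, hlog]
    rw [hk]
    linarith [h3]
  have hdisj : Disjoint (univ.filter (fun i : Fin n => (1 + θ) * p i < q i))
      (univ.filter (fun i : Fin n => ¬ (1 + θ) * p i < q i ∧ 0 < p i)) := by
    rw [Finset.disjoint_left]
    intro i hi hi'
    rw [Finset.mem_filter] at hi hi'
    exact hi'.2.1 hi.2
  rw [ge_iff_le, hL]
  calc c * ((∑ i ∈ univ.filter (fun i => (1 + θ) * p i < q i), |q i - p i|) +
          (1 / θ) * ∑ i ∈ univ.filter (fun i => ¬ (1 + θ) * p i < q i ∧ 0 < p i),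
            (q i - p i) ^ 2 / p i)
      = (∑ i ∈ univ.filter (fun i => (1 + θ) * p i < q i), c * |q i - p i|) +
        ∑ i ∈ univ.filter (fun i => ¬ (1 + θ) * p i < q i ∧ 0 < p i),
            (c * (1/θ)) * ((q i - p i) ^ 2 / p i) := by
        rw [← Finset.mul_sum, ← Finset.mul_sum]
        ring
    _ ≤ (∑ i ∈ univ.filter (fun i => (1 + θ) * p i < q i), t i) +
        ∑ i ∈ univ.filter (fun i => ¬ (1 + θ) * p i < q i ∧ 0 < p i), t i :=
        add_le_add (Finset.sum_le_sum htA) (Finset.sum_le_sum htB)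
    _ = ∑ i ∈ (univ.filter (fun i => (1 + θ) * p i < q i)) ∪
          (univ.filter (fun i => ¬ (1 + θ) * p i < q i ∧ 0 < p i)), t i :=
        (Finset.sum_union hdisj).symm
    _ ≤ ∑ i, t i :=
        Finset.sum_le_sum_of_subset_of_nonneg (Finset.subset_univ _) (fun i _ _ => ht0 i)
end

section
/- Let p, q be probability distributions on a finite index set [n], with q_i > 0 whenever p_i > 0 and p_i > 0 whenever q_i > 0. Let A = {i : q_i > 2p_i} and B = {i : q_i ≤ 2p_i}. Then D_KL(p‖q) ≥ (1 - ln 2) · ( Σ_{i∈A} |q_i - p_i| + Σ_{i∈B, p_i>0} (q_i - p_i)²/p_i ). -/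
open Finset

private lemma l2half : 1/2 < Real.log 2 := by
  have := Real.log_two_gt_d9; linarith

private lemma l2lt : Real.log 2 < 3/4 := by
  have := Real.log_two_lt_d9; linarith

/-- key inequality on (0,2]: (1 - log 2)*(x-1)^2 ≤ x - 1 - log x -/
private lemma keyD : ∀ x : ℝ, 0 < x → x ≤ 2 →
    (1 - Real.log 2) * (x - 1)^2 ≤ x - 1 - Real.log x := by
  set c : ℝ := 1 - Real.log 2 with hc
  have hc0 : 0 < c := by have := l2lt; simp [hc]; linarith
  have h2c : 2 * c < 1 := by have := l2half; simp [hc]; linarith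
  have h2c' : 1/2 ≤ 2 * c := by have := l2lt; simp [hc]; linarith
  set f : ℝ → ℝ := fun x => x - 1 - c * (x - 1)^2 - Real.log x with hf
  have hder : ∀ x : ℝ, 0 < x → HasDerivAt f (1 - c * (2 * (x-1)) - 1/x) x := by
    intro x hx
    have h1 : HasDerivAt (fun y : ℝ => y - 1) 1 x := (hasDerivAt_id x).sub_const 1
    have h2 : HasDerivAt (fun y : ℝ => c * (y - 1)^2) (c * (2 * (x-1))) x := by
      have : HasDerivAt (fun y : ℝ => (y - 1)^2) (2 * (x-1)) x := by
        simpa using ((hasDerivAt_id x).sub_const 1).fun_pow 2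
      exact this.const_mul c
    have h3 : HasDerivAt Real.log (1/x) x := by
      simpa [one_div] using Real.hasDerivAt_log (ne_of_gt hx)
    exact (h1.sub h2).sub h3
  have hderiv : ∀ x : ℝ, 0 < x → deriv f x = (x - 1) * (1 - 2*c*x) / x := by
    intro x hx
    rw [(hder x hx).deriv]
    field_simp
    ring
  have hcont : ∀ s : Set ℝ, s ⊆ Set.Ioi 0 → ContinuousOn f s := by
    intro s hs x hx
    exact ((hder x (hs hx)).continuousAt).continuousWithinAt
  have hdiff : ∀ s : Set ℝ, s ⊆ Set.Ioi 0 → DifferentiableOn ℝ f s := by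
    intro s hs x hx
    exact ((hder x (hs hx)).differentiableAt).differentiableWithinAt
  have hf1 : f 1 = 0 := by simp [hf]
  have hf2 : f 2 = 0 := by simp [hf, hc]; ring
  have hr1 : (1:ℝ) ≤ 1/(2*c) := by
    rw [le_div_iff₀ (by linarith)]; linarith
  have hr2 : 1/(2*c) ≤ 2 := by
    rw [div_le_iff₀ (by linarith)]; linarith
  -- antitone on Ioc 0 1
  have hA : AntitoneOn f (Set.Ioc 0 1) := by
    apply antitoneOn_of_deriv_nonpos (convex_Ioc 0 1)
      (hcont _ (fun x hx => hx.1)) (hdiff _ ?_)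
    · intro x hx
      rw [interior_Ioc] at hx
      rw [hderiv x hx.1]
      apply div_nonpos_of_nonpos_of_nonneg _ hx.1.le
      have : 0 < 1 - 2*c*x := by nlinarith [hx.1, hx.2, h2c]
      nlinarith [hx.2]
    · rw [interior_Ioc]; exact fun x hx => hx.1
  -- monotone on Icc 1 (1/(2c))
  have hM : MonotoneOn f (Set.Icc 1 (1/(2*c))) := by
    apply monotoneOn_of_deriv_nonneg (convex_Icc _ _)
      (hcont _ (fun x hx => lt_of_lt_of_le one_pos hx.1)) (hdiff _ ?_)
    · intro x hx
      rw [interior_Icc] at hx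
      rw [hderiv x (by linarith [hx.1])]
      apply div_nonneg _ (by linarith [hx.1])
      have hx2 : 2*c*x < 1 := by
        have := hx.2
        rw [lt_div_iff₀ (by linarith)] at this
        linarith
      nlinarith [hx.1]
    · rw [interior_Icc]; exact fun x hx => lt_of_lt_of_le one_pos (le_of_lt hx.1)
  -- antitone on Icc (1/(2c)) 2
  have hA2 : AntitoneOn f (Set.Icc (1/(2*c)) 2) := by
    apply antitoneOn_of_deriv_nonpos (convex_Icc _ _)
      (hcont _ (fun x hx => lt_of_lt_of_le (lt_of_lt_of_le one_pos hr1) hx.1)) (hdiff _ ?_)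
    · intro x hx
      rw [interior_Icc] at hx
      have hx0 : 0 < x := lt_of_le_of_lt (by linarith [hr1]) hx.1
      rw [hderiv x hx0]
      apply div_nonpos_of_nonpos_of_nonneg _ hx0.le
      have hx2 : 1 ≤ 2*c*x := by
        have := hx.1
        rw [div_lt_iff₀ (by linarith)] at this
        linarith
      have hx1 : 1 ≤ x := le_trans hr1 hx.1.le
      nlinarith
    · rw [interior_Icc]
      exact fun x hx => lt_of_lt_of_le (lt_of_lt_of_le one_pos hr1) (le_of_lt hx.1)
  intro x hx hx2
  have hfx : 0 ≤ f x := by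
    rcases le_or_gt x 1 with h1 | h1
    · have := hA ⟨hx, h1⟩ (Set.mem_Ioc.mpr ⟨one_pos, le_refl 1⟩) h1
      rw [hf1] at this; linarith
    rcases le_or_gt x (1/(2*c)) with h2 | h2
    · have := hM (Set.mem_Icc.mpr ⟨le_refl 1, hr1⟩) ⟨h1.le, h2⟩ h1.le
      rw [hf1] at this; linarith
    · have := hA2 ⟨h2.le, hx2⟩ (Set.mem_Icc.mpr ⟨hr2, le_refl 2⟩) hx2
      rw [hf2] at this; linarith
  simp only [hf] at hfx
  linarith

/-- pointwise bound, case A -/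
private lemma keyA (p q : ℝ) (hp : 0 < p) (hq : 2 * p < q) :
    (1 - Real.log 2) * (q - p) ≤ p * Real.log (p / q) + (q - p) := by
  have hq0 : 0 < q := lt_trans (by linarith) hq
  have hlog : Real.log (q / (2*p)) ≤ q/(2*p) - 1 :=
    Real.log_le_sub_one_of_pos (by positivity)
  rw [Real.log_div hq0.ne' (by positivity), Real.log_mul (by norm_num) hp.ne'] at hlog
  have hmul := mul_le_mul_of_nonneg_left hlog hp.le
  have he : p * (q / (2*p)) = q/2 := by field_simp
  rw [Real.log_div hp.ne' hq0.ne']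
  have hl2 := l2half
  nlinarith [hmul, he, mul_nonneg (by linarith : (0:ℝ) ≤ Real.log 2 - 1/2) (by linarith : (0:ℝ) ≤ q - 2*p)]

/-- pointwise bound, case B -/
private lemma keyB (p q : ℝ) (hp : 0 < p) (hq0 : 0 < q) (hq : q ≤ 2 * p) :
    (1 - Real.log 2) * ((q - p)^2 / p) ≤ p * Real.log (p / q) + (q - p) := by
  have hx0 : 0 < q / p := by positivity
  have hx2 : q / p ≤ 2 := by rw [div_le_iff₀ hp]; linarith
  have hkey := keyD (q/p) hx0 hx2
  rw [Real.log_div hq0.ne' hp.ne'] at hkey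
  have hmul := mul_le_mul_of_nonneg_left hkey hp.le
  have he : p * (q / p) = q := by field_simp
  have he2 : p * ((q/p - 1)^2) = (q - p)^2 / p := by field_simp
  have e1 : p * ((1 - Real.log 2) * (q/p - 1)^2) = (1 - Real.log 2) * ((q - p)^2 / p) := by
    rw [← he2]; ring
  have e2 : p * (q/p - 1 - (Real.log q - Real.log p))
      = q - p - p * (Real.log q - Real.log p) := by
    rw [mul_sub, mul_sub, he]; ring
  rw [Real.log_div hp.ne' hq0.ne']
  nlinarith [hmul, e1, e2]

open Finset in
theorem stmt6 (n : ℕ) (p q : Fin n → ℝ)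
    (hp0 : ∀ i, 0 ≤ p i) (hq0 : ∀ i, 0 ≤ q i)
    (hp1 : ∑ i, p i = 1) (hq1 : ∑ i, q i = 1)
    (hpq : ∀ i, 0 < p i → 0 < q i) (hqp : ∀ i, 0 < q i → 0 < p i) :
    ∑ i, p i * Real.log (p i / q i) ≥
      (1 - Real.log 2) *
        ((∑ i ∈ univ.filter (fun i => 2 * p i < q i), |q i - p i|) +
          ∑ i ∈ univ.filter (fun i => q i ≤ 2 * p i ∧ 0 < p i),
            (q i - p i) ^ 2 / p i) := by
  set c : ℝ := 1 - Real.log 2 with hc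
  have hc0 : 0 < c := by have := l2lt; simp [hc]; linarith
  set F : Fin n → ℝ := fun i => p i * Real.log (p i / q i) + (q i - p i) with hF
  have hsum : ∑ i, p i * Real.log (p i / q i) = ∑ i, F i := by
    simp only [hF]
    rw [Finset.sum_add_distrib, Finset.sum_sub_distrib, hp1, hq1]
    ring
  rw [ge_iff_le, hsum,
    ← Finset.sum_filter_add_sum_filter_not univ (fun i => 2 * p i < q i) F]
  have hA : c * ∑ i ∈ univ.filter (fun i => 2 * p i < q i), |q i - p i|
      ≤ ∑ i ∈ univ.filter (fun i => 2 * p i < q i), F i := by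
    rw [Finset.mul_sum]
    apply Finset.sum_le_sum
    intro i hi
    rw [Finset.mem_filter] at hi
    have hqi : 0 < q i := lt_of_le_of_lt (by nlinarith [hp0 i]) hi.2
    have hpi : 0 < p i := hqp i hqi
    rw [abs_of_pos (by nlinarith [hi.2])]
    exact keyA (p i) (q i) hpi hi.2
  have hB : c * ∑ i ∈ univ.filter (fun i => q i ≤ 2 * p i ∧ 0 < p i), (q i - p i)^2 / p i
      ≤ ∑ i ∈ univ.filter (fun i => ¬ (2 * p i < q i)), F i := by
    rw [Finset.mul_sum]
    have hsub : univ.filter (fun i => q i ≤ 2 * p i ∧ 0 < p i)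
        = (univ.filter (fun i => ¬ (2 * p i < q i))).filter (fun i => 0 < p i) := by
      rw [Finset.filter_filter]
      apply Finset.filter_congr
      intro i _
      simp [not_lt]
    rw [hsub, Finset.sum_filter]
    apply Finset.sum_le_sum
    intro i hi
    rw [Finset.mem_filter, not_lt] at hi
    by_cases hpi : 0 < p i
    · rw [if_pos hpi]
      exact keyB (p i) (q i) hpi (hpq i hpi) hi.2
    · rw [if_neg hpi]
      have hp0' : p i = 0 := le_antisymm (not_lt.mp hpi) (hp0 i)
      have hq0' : q i = 0 := le_antisymm (by linarith [hi.2]) (hq0 i)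
      simp [hF, hp0', hq0']
  calc c * (_ + _) = c * _ + c * _ := by ring
    _ ≤ _ := add_le_add hA hB
end

section
/- Let Y be an n×n nonnegative real matrix that is column stochastic (each column sums to 1), supported on the edge set of a bipartite graph G = (L ∪ R, E) with |L| = |R| = n (i.e., Y_{ij} > 0 implies (i,j) ∈ E). If Σ_{i=1}^n |Σ_{j=1}^n Y_{ij} - 1| ≤ n·ε, then for every subset S ⊆ L, the neighborhood Γ(S) in G satisfies |Γ(S)| ≥ |S| - n·ε. -/
open Finset in
theorem stmt11 (n : ℕ) (Y : Fin n → Fin n → ℝ) (E : Fin n → Fin n → Prop)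
    [DecidableRel E] (ε : ℝ)
    (hY0 : ∀ i j, 0 ≤ Y i j)
    (hcol : ∀ j, ∑ i, Y i j = 1)
    (hsupp : ∀ i j, 0 < Y i j → E i j)
    (herr : ∑ i, |(∑ j, Y i j) - 1| ≤ n * ε) :
    ∀ S : Finset (Fin n),
      ((univ.filter (fun j => ∃ i ∈ S, E i j)).card : ℝ) ≥ (S.card : ℝ) - n * ε := by
  intro S
  set T := univ.filter (fun j => ∃ i ∈ S, E i j) with hT
  -- Step 1: ∑ i in S, ∑ j, Y i j ≤ T.card
  have hzero : ∀ i ∈ S, ∀ j, j ∉ T → Y i j = 0 := by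
    intro i hi j hj
    by_contra h
    have hpos : 0 < Y i j := lt_of_le_of_ne (hY0 i j) (Ne.symm h)
    exact hj (mem_filter.mpr ⟨mem_univ j, i, hi, hsupp i j hpos⟩)
  have h1 : ∑ i ∈ S, ∑ j, Y i j ≤ (T.card : ℝ) := by
    have e1 : ∑ i ∈ S, ∑ j, Y i j = ∑ i ∈ S, ∑ j ∈ T, Y i j := by
      refine Finset.sum_congr rfl fun i hi => ?_
      rw [← Finset.sum_filter_add_sum_filter_not univ (· ∈ T)]
      have : ∑ j ∈ univ.filter (· ∉ T), Y i j = 0 :=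
        Finset.sum_eq_zero fun j hj => hzero i hi j (mem_filter.mp hj).2
      simp [this, Finset.filter_mem_eq_inter]
    rw [e1, Finset.sum_comm]
    calc ∑ j ∈ T, ∑ i ∈ S, Y i j ≤ ∑ j ∈ T, ∑ i, Y i j := by
          refine Finset.sum_le_sum fun j _ => ?_
          exact Finset.sum_le_sum_of_subset_of_nonneg (subset_univ S)
            (fun i _ _ => hY0 i j)
      _ = (T.card : ℝ) := by simp [hcol]
  -- Step 2: S.card - n*ε ≤ ∑ i in S, ∑ j, Y i j
  have h2 : (S.card : ℝ) - n * ε ≤ ∑ i ∈ S, ∑ j, Y i j := by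
    have hsub : ∑ i ∈ S, |(∑ j, Y i j) - 1| ≤ n * ε :=
      le_trans (Finset.sum_le_sum_of_subset_of_nonneg (subset_univ S)
        (fun i _ _ => abs_nonneg _)) herr
    have : ∀ i ∈ S, (1 : ℝ) - |(∑ j, Y i j) - 1| ≤ ∑ j, Y i j := by
      intro i _
      have := abs_sub_abs_le_abs_sub (1 : ℝ) (∑ j, Y i j)
      have h := neg_abs_le ((∑ j, Y i j) - 1)
      linarith [abs_sub_comm (∑ j, Y i j) 1]
    calc (S.card : ℝ) - n * ε ≤ ∑ i ∈ S, ((1 : ℝ) - |(∑ j, Y i j) - 1|) := by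
          rw [Finset.sum_sub_distrib]
          simp only [Finset.sum_const, nsmul_eq_mul, mul_one]
          linarith
      _ ≤ ∑ i ∈ S, ∑ j, Y i j := Finset.sum_le_sum this
  linarith
end

section
/- Let p, q be probability distributions on a finite set with q_i > 0 for all i, and let q_min be the minimum entry of q. Then D_KL(p‖q) ≤ ln(1 + ‖p - q‖₂²/q_min) ≤ ln(1 + 2/q_min). -/
theorem stmt13 (n : ℕ) (p q : Fin n → ℝ) (qmin : ℝ)
    (hp0 : ∀ i, 0 ≤ p i) (hq0 : ∀ i, 0 < q i)
    (hp1 : ∑ i, p i = 1) (hq1 : ∑ i, q i = 1)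
    (hqmin_le : ∀ i, qmin ≤ q i) (hqmin_mem : ∃ i, q i = qmin) :
    ∑ i, p i * Real.log (p i / q i) ≤
        Real.log (1 + (∑ i, (p i - q i) ^ 2) / qmin) ∧
      Real.log (1 + (∑ i, (p i - q i) ^ 2) / qmin) ≤ Real.log (1 + 2 / qmin) := by
  classical
  obtain ⟨i₀, hi₀⟩ := hqmin_mem
  have hqmin : 0 < qmin := hi₀ ▸ hq0 i₀
  have hS0 : 0 ≤ ∑ i, (p i - q i) ^ 2 := Finset.sum_nonneg fun i _ => sq_nonneg _
  have hpos1 : (0:ℝ) < 1 + (∑ i, (p i - q i) ^ 2) / qmin := by positivity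
  -- some p i is nonzero
  have hex : ∃ i, p i ≠ 0 := by
    by_contra h
    push_neg at h
    simp [h] at hp1
  obtain ⟨j, hj⟩ := hex
  have hchipos : 0 < ∑ i, (p i)^2 / q i := by
    apply Finset.sum_pos' (fun i _ => div_nonneg (sq_nonneg _) (hq0 i).le)
    exact ⟨j, Finset.mem_univ j, by
      have hpj : 0 < p j := lt_of_le_of_ne (hp0 j) (Ne.symm hj)
      exact div_pos (by positivity) (hq0 j)⟩
  -- chi-square bound
  have hchi : ∑ i, (p i)^2 / q i ≤ 1 + (∑ i, (p i - q i) ^ 2) / qmin := by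
    have expand : ∀ i, (p i)^2 / q i = q i + 2*(p i - q i) + (p i - q i)^2 / q i := by
      intro i
      have := (hq0 i).ne'
      field_simp
      ring
    calc ∑ i, (p i)^2 / q i
        = ∑ i, (q i + 2*(p i - q i) + (p i - q i)^2 / q i) := by
          exact Finset.sum_congr rfl fun i _ => expand i
      _ = (∑ i, q i) + 2*((∑ i, p i) - (∑ i, q i)) + ∑ i, (p i - q i)^2 / q i := by
          rw [Finset.sum_add_distrib, Finset.sum_add_distrib, ← Finset.mul_sum,
            Finset.sum_sub_distrib]
      _ = 1 + ∑ i, (p i - q i)^2 / q i := by rw [hp1, hq1]; ring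
      _ ≤ 1 + (∑ i, (p i - q i) ^ 2) / qmin := by
          rw [Finset.sum_div]
          gcongr with i
          exact hqmin_le i
  -- Jensen: KL ≤ log of chi-square term
  have hKL : ∑ i, p i * Real.log (p i / q i) ≤ Real.log (∑ i, (p i)^2 / q i) := by
    set T := Finset.univ.filter (fun i => p i ≠ 0) with hT
    have hsubT : T ⊆ Finset.univ := Finset.subset_univ T
    have hw1 : ∑ i ∈ T, p i = 1 := by
      rw [hT, Finset.sum_filter_ne_zero]; exact hp1
    have hmem : ∀ i ∈ T, p i / q i ∈ Set.Ioi (0:ℝ) := by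
      intro i hi
      rw [hT, Finset.mem_filter] at hi
      exact div_pos (lt_of_le_of_ne (hp0 i) (Ne.symm hi.2)) (hq0 i)
    have hjen := strictConcaveOn_log_Ioi.concaveOn.le_map_sum
      (fun i _ => hp0 i) hw1 hmem
    simp only [smul_eq_mul] at hjen
    have e1 : ∑ i ∈ T, p i * Real.log (p i / q i) = ∑ i, p i * Real.log (p i / q i) :=
      Finset.sum_subset hsubT (by
        intro i _ hi
        rw [hT, Finset.mem_filter] at hi
        push_neg at hi
        simp [hi (Finset.mem_univ i)])
    have e2 : ∑ i ∈ T, p i * (p i / q i) = ∑ i, (p i)^2 / q i := by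
      rw [Finset.sum_subset hsubT (by
        intro i _ hi
        rw [hT, Finset.mem_filter] at hi
        push_neg at hi
        simp [hi (Finset.mem_univ i)])]
      exact Finset.sum_congr rfl fun i _ => by rw [sq]; ring
    rw [← e1, ← e2]
    exact hjen
  constructor
  · calc ∑ i, p i * Real.log (p i / q i)
        ≤ Real.log (∑ i, (p i)^2 / q i) := hKL
      _ ≤ Real.log (1 + (∑ i, (p i - q i) ^ 2) / qmin) :=
          Real.log_le_log hchipos hchi
  · apply Real.log_le_log hpos1
    gcongr
    -- ∑ (p i - q i)^2 ≤ 2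
    have hle : ∀ i, (p i - q i)^2 ≤ p i + q i := by
      intro i
      have hp1i : p i ≤ 1 := by
        rw [← hp1]
        exact Finset.single_le_sum (fun k _ => hp0 k) (Finset.mem_univ i)
      have hq1i : q i ≤ 1 := by
        rw [← hq1]
        exact Finset.single_le_sum (fun k _ => (hq0 k).le) (Finset.mem_univ i)
      nlinarith [hp0 i, (hq0 i).le, sq_nonneg (p i - q i), mul_nonneg (hp0 i) (hq0 i).le]
    calc ∑ i, (p i - q i)^2 ≤ ∑ i, (p i + q i) :=
          Finset.sum_le_sum fun i _ => hle i
      _ = 2 := by rw [Finset.sum_add_distrib, hp1, hq1]; norm_num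
end

section
/- Let Z and A' be n×m nonnegative matrices, let r_i = Σ_j Z_{ij} with each r_i > 0, and let B be the matrix obtained from A' by row-scaling: B_{ij} = A'_{ij}·r_i / r'_i where r'_i = Σ_j A'_{ij} > 0 for every row i with some Z_{ij}>0. Suppose A'_{ij} > 0 whenever Z_{ij} > 0, and let h = Σ_i r_i. Then D(Z,A') - D(Z,B) = D_KL(π‖π') where π_i = r_i/h, π'_i = r'_i/h (assuming Σ_i r'_i = h), and D(M,N) := (1/h)·Σ_{i,j} M_{ij}·ln(M_{ij}/N_{ij}). -/
theorem stmt14 (n m : ℕ) (Z A' : Fin n → Fin m → ℝ) (h : ℝ)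
    (hZ0 : ∀ i j, 0 ≤ Z i j) (hA0 : ∀ i j, 0 ≤ A' i j)
    (hr : ∀ i, 0 < ∑ j, Z i j)
    (hr' : ∀ i, (∃ j, 0 < Z i j) → 0 < ∑ j, A' i j)
    (hsupp : ∀ i j, 0 < Z i j → 0 < A' i j)
    (hh : h = ∑ i, ∑ j, Z i j)
    (hsum : ∑ i, ∑ j, A' i j = h) :
    (1 / h) * (∑ i, ∑ j, Z i j * Real.log (Z i j / A' i j)) -
        (1 / h) * (∑ i, ∑ j,
          Z i j * Real.log (Z i j / (A' i j * (∑ k, Z i k) / (∑ k, A' i k)))) =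
      ∑ i, ((∑ j, Z i j) / h) *
        Real.log (((∑ j, Z i j) / h) / ((∑ j, A' i j) / h)) := by
  rcases Nat.eq_zero_or_pos n with h0 | h0
  · subst h0; simp
  have hne : Nonempty (Fin n) := ⟨⟨0, h0⟩⟩
  have hhpos : 0 < h := by
    rw [hh]; exact Finset.sum_pos (fun i _ => hr i) Finset.univ_nonempty
  have hex : ∀ i, ∃ j, 0 < Z i j := by
    intro i; by_contra hc; push_neg at hc
    have : ∑ j, Z i j = 0 :=
      Finset.sum_eq_zero fun j _ => le_antisymm (hc j) (hZ0 i j)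
    exact absurd this (ne_of_gt (hr i))
  have hr'pos : ∀ i, 0 < ∑ j, A' i j := fun i => hr' i (hex i)
  have key : ∀ i j, Z i j * Real.log (Z i j / A' i j) -
      Z i j * Real.log (Z i j / (A' i j * (∑ k, Z i k) / (∑ k, A' i k))) =
      Z i j * Real.log ((∑ k, Z i k) / (∑ k, A' i k)) := by
    intro i j
    rcases eq_or_lt_of_le (hZ0 i j) with h0' | hpos
    · simp [← h0']
    · have hA := hsupp i j hpos
      have hri := hr i
      have hri' := hr'pos i
      rw [Real.log_div hpos.ne' hA.ne',
        Real.log_div hpos.ne' (by positivity : (A' i j * (∑ k, Z i k) / (∑ k, A' i k)) ≠ 0),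
        Real.log_div (mul_pos hA hri).ne' hri'.ne',
        Real.log_mul hA.ne' hri.ne',
        Real.log_div hri.ne' hri'.ne']
      ring
  rw [← mul_sub, ← Finset.sum_sub_distrib]
  have step : ∀ i : Fin n, ((∑ j, Z i j * Real.log (Z i j / A' i j)) -
      ∑ j, Z i j * Real.log (Z i j / (A' i j * (∑ k, Z i k) / (∑ k, A' i k)))) =
      (∑ j, Z i j) * Real.log ((∑ k, Z i k) / (∑ k, A' i k)) := by
    intro i
    rw [← Finset.sum_sub_distrib, Finset.sum_congr rfl fun j _ => key i j,
      ← Finset.sum_mul]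
  rw [Finset.sum_congr rfl fun i _ => step i, Finset.mul_sum]
  refine Finset.sum_congr rfl fun i _ => ?_
  have harg : ((∑ j, Z i j) / h) / ((∑ j, A' i j) / h) = (∑ j, Z i j) / (∑ j, A' i j) := by
    field_simp
  rw [harg]
  ring
end

section
/- Let p, q be probability distributions on [n] with p_i > 0 for all i, and ρ ≥ 1, h ≥ 1 be reals with p_i ≤ ρ/h for all i. If D_KL(p‖q) ≥ C·(Σ_{i∈A}|q_i - p_i| + Σ_{i∈B}(q_i - p_i)²/p_i) with A = {i : q_i > 2p_i}, B = [n]\A, and C > 0, then D_KL(p‖q) ≥ min( (C/(2ρh))·‖h(q-p)‖₂², (C/(√2·h))·‖h(q-p)‖₂ ), where ‖h(q-p)‖₂² = h²·Σ_i(q_i - p_i)². -/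
open Finset in
theorem stmt19 (n : ℕ) (p q : Fin n → ℝ) (ρ h C : ℝ)
    (hp0 : ∀ i, 0 < p i) (hq0 : ∀ i, 0 ≤ q i)
    (hp1 : ∑ i, p i = 1) (hq1 : ∑ i, q i = 1)
    (hρ : 1 ≤ ρ) (hh : 1 ≤ h) (hpρ : ∀ i, p i ≤ ρ / h) (hC : 0 < C)
    (hKL : ∑ i, p i * Real.log (p i / q i) ≥
      C * ((∑ i ∈ univ.filter (fun i => 2 * p i < q i), |q i - p i|) +
        ∑ i ∈ univ.filter (fun i => ¬ 2 * p i < q i), (q i - p i) ^ 2 / p i)) :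
    ∑ i, p i * Real.log (p i / q i) ≥
      min ((C / (2 * ρ * h)) * (h ^ 2 * ∑ i, (q i - p i) ^ 2))
        ((C / (Real.sqrt 2 * h)) * Real.sqrt (h ^ 2 * ∑ i, (q i - p i) ^ 2)) := by
  have hh0 : (0:ℝ) < h := lt_of_lt_of_le one_pos hh
  have hρ0 : (0:ℝ) < ρ := lt_of_lt_of_le one_pos hρ
  set A := univ.filter (fun i => 2 * p i < q i) with hA
  set B := univ.filter (fun i => ¬ 2 * p i < q i) with hB
  set SA := ∑ i ∈ A, (q i - p i) ^ 2 with hSA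
  set SB := ∑ i ∈ B, (q i - p i) ^ 2 with hSB
  have hSAnn : 0 ≤ SA := Finset.sum_nonneg fun i _ => sq_nonneg _
  have hSBnn : 0 ≤ SB := Finset.sum_nonneg fun i _ => sq_nonneg _
  have hsplit : ∑ i, (q i - p i) ^ 2 = SA + SB := by
    rw [hSA, hSB, hA, hB, Finset.sum_filter_add_sum_filter_not]
  set S := ∑ i, (q i - p i) ^ 2 with hS
  have hSnn : 0 ≤ S := Finset.sum_nonneg fun i _ => sq_nonneg _
  have hTA : 0 ≤ ∑ i ∈ A, |q i - p i| := Finset.sum_nonneg fun i _ => abs_nonneg _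
  have hTB : 0 ≤ ∑ i ∈ B, (q i - p i) ^ 2 / p i :=
    Finset.sum_nonneg fun i _ => div_nonneg (sq_nonneg _) (hp0 i).le
  refine le_trans ?_ hKL
  rcases le_or_gt SA SB with hcase | hcase
  · -- B dominates: S ≤ 2 SB
    refine le_trans (min_le_left _ _) ?_
    have key : (h / ρ) * SB ≤ ∑ i ∈ B, (q i - p i) ^ 2 / p i := by
      rw [hSB, Finset.mul_sum]
      refine Finset.sum_le_sum fun i _ => ?_
      have h1 : h * p i ≤ ρ := by
        have := hpρ i
        rw [le_div_iff₀ hh0] at this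
        linarith
      rw [div_mul_eq_mul_div, div_le_div_iff₀ hρ0 (hp0 i)]
      nlinarith [sq_nonneg (q i - p i)]
    have hS2 : S ≤ 2 * SB := by rw [hsplit]; linarith
    have : (C / (2 * ρ * h)) * (h ^ 2 * S) = C * ((h / ρ) * S / 2) := by
      field_simp
    rw [this]
    have : (h / ρ) * S / 2 ≤ (∑ i ∈ A, |q i - p i|) + ∑ i ∈ B, (q i - p i) ^ 2 / p i := by
      have h1 : (h / ρ) * S / 2 ≤ (h / ρ) * SB := by
        rw [div_le_iff₀ (by norm_num : (0:ℝ) < 2)]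
        have hhρ : 0 ≤ h / ρ := div_nonneg hh0.le hρ0.le
        calc (h / ρ) * S ≤ (h / ρ) * (2 * SB) := by gcongr
          _ = (h / ρ) * SB * 2 := by ring
      linarith [key]
    exact mul_le_mul_of_nonneg_left this hC.le
  · -- A dominates: S ≤ 2 SA
    refine le_trans (min_le_right _ _) ?_
    have hsq : Real.sqrt SA ≤ ∑ i ∈ A, |q i - p i| := by
      have h1 : SA ≤ (∑ i ∈ A, |q i - p i|) ^ 2 := by
        rw [hSA]
        calc ∑ i ∈ A, (q i - p i) ^ 2 = ∑ i ∈ A, |q i - p i| ^ 2 := by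
              simp [sq_abs]
          _ ≤ (∑ i ∈ A, |q i - p i|) ^ 2 :=
              Finset.sum_sq_le_sq_sum_of_nonneg fun i _ => abs_nonneg _
      calc Real.sqrt SA ≤ Real.sqrt ((∑ i ∈ A, |q i - p i|) ^ 2) := Real.sqrt_le_sqrt h1
        _ = ∑ i ∈ A, |q i - p i| := Real.sqrt_sq hTA
    have hS2 : S / 2 ≤ SA := by rw [hsplit]; linarith
    have heq : (C / (Real.sqrt 2 * h)) * Real.sqrt (h ^ 2 * S) =
        C * Real.sqrt (S / 2) := by
      rw [Real.sqrt_mul (sq_nonneg h), Real.sqrt_sq hh0.le,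
        show S / 2 = S / (2:ℝ) from rfl, Real.sqrt_div hSnn 2]
      have h2 : Real.sqrt 2 ≠ 0 := by positivity
      field_simp
    rw [heq]
    have : Real.sqrt (S / 2) ≤ (∑ i ∈ A, |q i - p i|) + ∑ i ∈ B, (q i - p i) ^ 2 / p i := by
      have := Real.sqrt_le_sqrt hS2
      linarith [this.trans hsq]
    exact mul_le_mul_of_nonneg_left this hC.le
end
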